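/- arXiv:1302.4245 — 2 statements merged into one kernel-verified Lean document; each statement's English description precedes it below -/
import Mathlib

section
/- The function k(\tau) = exp(-2\pi^2 \tau^2 \sigma^2) \cos(2\pi \tau \mu) on \mathbb{R} is a positive definite function: for any points x_1, ..., x_n \in \mathbb{R} and complex numbers c_1, ..., c_n, \sum_{i,j} c_i \overline{c_j} k(x_i - x_j) \geq 0. -/
/-!
Write the Gaussian as `exp (-a (x - y)²) = exp (-a x²) · exp (2a x y) · exp (-a y²)`. The middle
factor is the series `∑ (2a)ᵐ / m! · xᵐ yᵐ` of rank-one kernels `xᵐ · conj yᵐ` with nonnegative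
weights, and the outer factors conjugate it by a feature map, so the Gaussian is positive
semidefinite. Multiplying by `cos (b (x - y))` keeps this, since
`cos (b (x - y)) = (e^{ibx} conj e^{iby} + conj e^{ibx} e^{iby}) / 2`.
-/

open Real ComplexConjugate

/-- "Positive definite" in the sense of the paper: the quadratic forms are only nonnegative. -/
def IsPosSemidefKernel {α : Type*} (K : α → α → ℂ) : Prop :=
  ∀ (n : ℕ) (x : Fin n → α) (c : Fin n → ℂ), 0 ≤ (∑ i, ∑ j, c i * conj (c j) * K (x i) (x j)).re

theorem isPosSemidefKernel_mul_conj {α : Type*} (f : α → ℂ) :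
    IsPosSemidefKernel fun x y => f x * conj (f y) := by
  intro n x c
  have h : ∑ i, ∑ j, c i * conj (c j) * (f (x i) * conj (f (x j))) =
      (Complex.normSq (∑ i, c i * f (x i)) : ℂ) := by
    rw [← Complex.mul_conj, map_sum, Finset.sum_mul_sum]
    simp only [map_mul]
    exact Finset.sum_congr rfl fun i _ => Finset.sum_congr rfl fun j _ => by ring
  rw [h, Complex.ofReal_re]
  exact Complex.normSq_nonneg _

namespace IsPosSemidefKernel

variable {α : Type*} {K L : α → α → ℂ}

theorem add (hK : IsPosSemidefKernel K) (hL : IsPosSemidefKernel L) :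
    IsPosSemidefKernel fun x y => K x y + L x y := by
  intro n x c
  simpa only [mul_add, Finset.sum_add_distrib, Complex.add_re] using
    add_nonneg (hK n x c) (hL n x c)

theorem ofReal_mul {r : ℝ} (hr : 0 ≤ r) (hK : IsPosSemidefKernel K) :
    IsPosSemidefKernel fun x y => r * K x y := by
  intro n x c
  have h : ∑ i, ∑ j, c i * conj (c j) * (r * K (x i) (x j)) =
      r * ∑ i, ∑ j, c i * conj (c j) * K (x i) (x j) := by
    simp only [Finset.mul_sum]
    exact Finset.sum_congr rfl fun i _ => Finset.sum_congr rfl fun j _ => by ring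
  rw [h, Complex.re_ofReal_mul]
  exact mul_nonneg hr (hK n x c)

theorem mul_conj (hK : IsPosSemidefKernel K) (f : α → ℂ) :
    IsPosSemidefKernel fun x y => f x * K x y * conj (f y) := by
  intro n x c
  convert hK n x fun i => c i * f (x i) using 4 with i _ j _
  simp only [map_mul]
  ring

theorem of_hasSum {K : ℕ → α → α → ℂ} (hK : ∀ m, IsPosSemidefKernel (K m))
    (hL : ∀ x y, HasSum (fun m => K m x y) (L x y)) : IsPosSemidefKernel L := by
  intro n x c
  have h : HasSum (fun m => ∑ i, ∑ j, c i * conj (c j) * K m (x i) (x j))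
      (∑ i, ∑ j, c i * conj (c j) * L (x i) (x j)) :=
    hasSum_sum fun i _ => hasSum_sum fun j _ => (hL (x i) (x j)).mul_left _
  exact (Complex.hasSum_re h).nonneg fun m => hK m n x c

end IsPosSemidefKernel

open IsPosSemidefKernel

theorem isPosSemidefKernel_exp_mul {a : ℝ} (ha : 0 ≤ a) :
    IsPosSemidefKernel fun x y : ℝ => (Real.exp (a * x * y) : ℂ) := by
  refine of_hasSum (K := fun m x y => ((a * x * y : ℝ) : ℂ) ^ m / m.factorial)
    (fun m => ?_) fun x y => ?_
  · convert (isPosSemidefKernel_mul_conj fun x : ℝ => (x : ℂ) ^ m).ofReal_mul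
      (r := a ^ m / m.factorial) (by positivity) using 1
    funext x y
    simp only [map_pow, Complex.conj_ofReal]
    push_cast
    ring
  · simpa only [Complex.ofReal_exp, Complex.exp_eq_exp_ℂ] using
      NormedSpace.expSeries_div_hasSum_exp ((a * x * y : ℝ) : ℂ)

theorem isPosSemidefKernel_gaussian {a : ℝ} (ha : 0 ≤ a) :
    IsPosSemidefKernel fun x y : ℝ => (Real.exp (-a * (x - y) ^ 2) : ℂ) := by
  convert (isPosSemidefKernel_exp_mul (mul_nonneg zero_le_two ha)).mul_conj
    fun x : ℝ => (Real.exp (-a * x ^ 2) : ℂ) using 1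
  funext x y
  rw [Complex.conj_ofReal, ← Complex.ofReal_mul, ← Complex.ofReal_mul, ← Real.exp_add,
    ← Real.exp_add]
  ring_nf

theorem IsPosSemidefKernel.mul_cos {K : ℝ → ℝ → ℂ} (hK : IsPosSemidefKernel K) (b : ℝ) :
    IsPosSemidefKernel fun x y => K x y * Real.cos (b * (x - y)) := by
  set e : ℝ → ℂ := fun x => Complex.exp (b * x * Complex.I)
  convert ((hK.mul_conj e).add (hK.mul_conj fun x => conj (e x))).ofReal_mul (r := 1 / 2)
    (by norm_num) using 1
  funext x y
  have e₁ : e x * conj (e y) = Complex.exp (b * (x - y) * Complex.I) := by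
    simp only [e, ← Complex.exp_conj, ← Complex.exp_add, map_mul, Complex.conj_ofReal,
      Complex.conj_I]
    ring_nf
  have e₂ : conj (e x) * e y = Complex.exp (-(b * (x - y)) * Complex.I) := by
    simp only [e, ← Complex.exp_conj, ← Complex.exp_add, map_mul, Complex.conj_ofReal,
      Complex.conj_I]
    ring_nf
  rw [Complex.ofReal_cos, Complex.cos, Complex.conj_conj]
  push_cast
  linear_combination (-K x y / 2) * (e₁ + e₂)

theorem sm_component_kernel_posdef_general (μ σ : ℝ)
    (n : ℕ) (x : Fin n → ℝ) (c : Fin n → ℂ) :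
    0 ≤ (∑ i, ∑ j, c i * (starRingEnd ℂ) (c j) *
      ((Real.exp (-2 * π ^ 2 * (x i - x j) ^ 2 * σ ^ 2) *
        Real.cos (2 * π * (x i - x j) * μ) : ℝ) : ℂ)).re := by
  have h := ((isPosSemidefKernel_gaussian (a := 2 * π ^ 2 * σ ^ 2) (by positivity)).mul_cos
    (2 * π * μ)) n x c
  convert h using 6 with i _ j _
  push_cast
  ring_nf

/-- The single-component spectral mixture kernel is a positive definite function on ℝ. -/
theorem sm_component_kernel_posdef (μ σ : ℝ) (hσ : 0 ≤ σ)
    (n : ℕ) (x : Fin n → ℝ) (c : Fin n → ℂ) :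
    0 ≤ (∑ i, ∑ j, c i * (starRingEnd ℂ) (c j) *
      ((Real.exp (-2 * π ^ 2 * (x i - x j) ^ 2 * σ ^ 2) *
        Real.cos (2 * π * (x i - x j) * μ) : ℝ) : ℂ)).re :=
  sm_component_kernel_posdef_general μ σ n x c
end

section
/- For any weights w_1, ..., w_Q \geq 0, means \mu_q \in \mathbb{R}^P, and variances v_q^{(p)} \geq 0, the spectral mixture kernel k(\tau) = \sum_{q=1}^Q w_q \prod_{p=1}^P exp(-2\pi^2 \tau_p^2 v_q^{(p)}) \cos(2\pi \tau_p \mu_q^{(p)}) is a positive definite function on \mathbb{R}^P. -/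
/-!
The one-dimensional Gaussian factor is the characteristic function of a centred normal law, and
a characteristic function `t ↦ ∫ exp (i ⟪ω, t⟫) dν(ω)` is positive definite because its quadratic
forms are `∫ |∑ⱼ cⱼ exp (-i ⟪ω, xⱼ⟫)|² dν(ω) ≥ 0`. The cosine factor is positive definite since
`cos (a (y - z)) = cos (a y) cos (a z) + sin (a y) sin (a z)` is a sum of two rank-one kernels.
Positive definiteness survives composition with the coordinate projections, products (Schur
product theorem) and nonnegative combinations.
-/

open Real Complex Matrix MeasureTheory ProbabilityTheory
open scoped ComplexOrder InnerProductSpace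

/-- Following the terminology of positive definite functions, the Gram matrices are only
required to be positive *semi*definite. -/
def IsPositiveDefinite {G : Type*} [AddGroup G] (k : G → ℂ) : Prop :=
  ∀ ⦃n : ℕ⦄ (x : Fin n → G), (Matrix.of fun i j => k (x i - x j)).PosSemidef

namespace IsPositiveDefinite

variable {G H : Type*} [AddGroup G] [AddGroup H] {k l : G → ℂ}

theorem one : IsPositiveDefinite fun _ : G => (1 : ℂ) := fun n _ => by
  simpa [vecMulVec] using posSemidef_vecMulVec_self_star (1 : Fin n → ℂ)

theorem mul (hk : IsPositiveDefinite k) (hl : IsPositiveDefinite l) :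
    IsPositiveDefinite fun t => k t * l t :=
  fun _ x => (hk x).hadamard (hl x)

theorem prod {ι : Type*} {k : ι → G → ℂ} (s : Finset ι)
    (hk : ∀ i ∈ s, IsPositiveDefinite (k i)) : IsPositiveDefinite fun t => ∏ i ∈ s, k i t := by
  classical
  induction s using Finset.induction_on with
  | empty => simpa using one
  | insert a s ha ih =>
    simp_rw [Finset.prod_insert ha]
    exact (hk a (by simp)).mul (ih fun i hi => hk i (by simp [hi]))

theorem sum {ι : Type*} {k : ι → G → ℂ} (s : Finset ι)
    (hk : ∀ i ∈ s, IsPositiveDefinite (k i)) : IsPositiveDefinite fun t => ∑ i ∈ s, k i t :=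
  fun _ x => by
  convert posSemidef_sum s fun i hi => hk i hi x
  ext
  simp [Matrix.sum_apply]

theorem const_mul (hk : IsPositiveDefinite k) {a : ℝ} (ha : 0 ≤ a) :
    IsPositiveDefinite fun t => (a : ℂ) * k t := fun _ x => by
  convert (hk x).smul ha
  ext
  simp [Complex.real_smul]

theorem comp (hk : IsPositiveDefinite k) (φ : H →+ G) : IsPositiveDefinite fun t => k (φ t) :=
  fun _ x => by simpa using hk (φ ∘ x)

theorem re_sum_nonneg (hk : IsPositiveDefinite k) {n : ℕ} (x : Fin n → G) (c : Fin n → ℂ) :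
    0 ≤ (∑ i, ∑ j, c i * (starRingEnd ℂ) (c j) * k (x i - x j)).re := by
  have h := (posSemidef_iff_dotProduct_mulVec.1 (hk x)).2 (star c)
  simp only [dotProduct, mulVec, Finset.mul_sum, of_apply, Pi.star_apply, Complex.star_def,
    Complex.conj_conj] at h
  convert (Complex.nonneg_iff.1 h).1 using 4
  ring

end IsPositiveDefinite

theorem isPositiveDefinite_charFun {E : Type*} [NormedAddCommGroup E] [InnerProductSpace ℝ E]
    [MeasurableSpace E] [BorelSpace E] (ν : Measure E) [IsFiniteMeasure ν] :
    IsPositiveDefinite (charFun ν) := fun n x => by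
  rw [posSemidef_iff_dotProduct_mulVec]
  refine ⟨?_, fun c => ?_⟩
  · ext i j
    simp [← charFun_neg]
  have hint : ∀ i j, Integrable
      (fun ω : E => star (c i) * (cexp (⟪ω, x i - x j⟫_ℝ * I) * c j)) ν :=
    fun i j => (((integrable_const (1 : ℝ)).mono (by fun_prop) (by simp)).mul_const _).const_mul _
  have hsq : ∀ ω : E, ∑ i, ∑ j, star (c i) * (cexp (⟪ω, x i - x j⟫_ℝ * I) * c j)
      = (normSq (∑ j, c j * cexp (-(⟪ω, x j⟫_ℝ * I))) : ℂ) := by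
    intro ω
    rw [normSq_eq_conj_mul_self, map_sum, Finset.sum_mul_sum]
    refine Finset.sum_congr rfl fun i _ => Finset.sum_congr rfl fun j _ => ?_
    rw [map_mul, ← exp_conj, inner_sub_right, ofReal_sub, sub_mul, sub_eq_add_neg,
      Complex.exp_add]
    simp only [RCLike.star_def, map_neg, map_mul, conj_ofReal, conj_I, mul_neg, neg_neg]
    ring
  calc 0 ≤ ((∫ ω, normSq (∑ j, c j * cexp (-(⟪ω, x j⟫_ℝ * I))) ∂ν : ℝ) : ℂ) := by
        exact_mod_cast integral_nonneg fun ω => normSq_nonneg _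
    _ = ∫ ω, ∑ i, ∑ j, star (c i) * (cexp (⟪ω, x i - x j⟫_ℝ * I) * c j) ∂ν := by
        simp_rw [hsq]
        exact integral_ofReal.symm
    _ = star c ⬝ᵥ (of (fun i j => charFun ν (x i - x j)) *ᵥ c) := by
        rw [integral_finsetSum _ fun i _ => integrable_finsetSum _ fun j _ => hint i j]
        simp_rw [integral_finsetSum _ fun j _ => hint _ j, integral_const_mul, integral_mul_const]
        simp [dotProduct, mulVec, charFun_apply, Finset.mul_sum]

theorem isPositiveDefinite_exp_neg_mul_sq {b : ℝ} (hb : 0 ≤ b) :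
    IsPositiveDefinite fun t : ℝ => (rexp (-b * t ^ 2) : ℂ) := by
  have hchar : (fun t : ℝ => (rexp (-b * t ^ 2) : ℂ))
      = charFun (gaussianReal 0 (2 * b).toNNReal) := by
    ext t
    rw [charFun_gaussianReal, ofReal_exp, Real.coe_toNNReal _ (by positivity)]
    push_cast
    ring_nf
  exact hchar ▸ isPositiveDefinite_charFun _

theorem isPositiveDefinite_cos (a : ℝ) :
    IsPositiveDefinite fun t : ℝ => (Real.cos (a * t) : ℂ) := fun _ x => by
  convert (posSemidef_vecMulVec_self_star fun i => (Real.cos (a * x i) : ℂ)).add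
    (posSemidef_vecMulVec_self_star fun i => (Real.sin (a * x i) : ℂ)) using 1
  ext i j
  simp only [of_apply, Matrix.add_apply, vecMulVec_apply, Pi.star_apply, Complex.star_def,
    Complex.conj_ofReal, mul_sub, Real.cos_sub]
  push_cast
  ring

theorem isPositiveDefinite_exp_mul_cos {v : ℝ} (hv : 0 ≤ v) (μ : ℝ) :
    IsPositiveDefinite fun t : ℝ =>
      (rexp (-2 * π ^ 2 * t ^ 2 * v) : ℂ) * (Real.cos (2 * π * t * μ) : ℂ) := by
  convert (isPositiveDefinite_exp_neg_mul_sq (b := 2 * π ^ 2 * v) (by positivity)).mul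
    (isPositiveDefinite_cos (2 * π * μ)) using 5 <;> ring

/-- The spectral mixture kernel is a positive definite function on ℝ^P. -/
theorem sm_kernel_posdef (P Q : ℕ) (w : Fin Q → ℝ) (hw : ∀ q, 0 ≤ w q)
    (μ : Fin Q → Fin P → ℝ) (v : Fin Q → Fin P → ℝ) (hv : ∀ q p, 0 ≤ v q p)
    (n : ℕ) (x : Fin n → Fin P → ℝ) (c : Fin n → ℂ) :
    0 ≤ (∑ i, ∑ j, c i * (starRingEnd ℂ) (c j) *
      ((∑ q, w q * ∏ p, Real.exp (-2 * π ^ 2 * (x i p - x j p) ^ 2 * v q p) *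
        Real.cos (2 * π * (x i p - x j p) * μ q p) : ℝ) : ℂ)).re := by
  have hk : IsPositiveDefinite fun τ : Fin P → ℝ =>
      ((∑ q, w q * ∏ p, rexp (-2 * π ^ 2 * τ p ^ 2 * v q p) *
        Real.cos (2 * π * τ p * μ q p) : ℝ) : ℂ) := by
    simp only [ofReal_sum, ofReal_mul, ofReal_prod]
    refine .sum _ fun q _ => .const_mul (.prod _ fun p _ => ?_) (hw q)
    exact (isPositiveDefinite_exp_mul_cos (hv q p) (μ q p)).comp
      (Pi.evalAddMonoidHom (fun _ : Fin P => ℝ) p)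
  exact hk.re_sum_nonneg x c
end
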